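/- arXiv:1306.6714 — 2 statements merged into one kernel-verified Lean document; each statement's English description precedes it below -/
import Mathlib

section
/- For every integer d ≥ 2, the eighth eigenmoment satisfies μ_d(8) = 7/128 + 1/(128(d² + d + 1)); in particular it differs from the eighth moment c_8 = 7/128 of the normalized semicircle distribution. -/
/-!
The recursion determines `μ 4`, `μ 6`, `μ 8` in turn, so everything reduces to evaluating the
finite sums over `P°_4`, `P°_6`, `P°_8`. The canonical representatives of the classes are
restricted growth strings, so these sums range over explicit finite lists which can be enumerated
by computation. The summand `m_π(d) · μ(n_1) ⋯ μ(n_r)` only depends on the multiset of the `α_j`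
and on the multiset of the `n_j`; tabulating these pairs (56 classes of length 8, of 7 kinds) gives
the sums as polynomials in `d` and the lower moments, and solving the recursion yields
`μ 4 = 1/8`, `μ 6 = 5/64` and `μ 8 = 7/128 + 1/(128 (d² + d + 1))`.
-/

open scoped BigOperators

/-- A closed acyclic path pattern (CAPP): every symbol occurs an even number of
times, and in the substring strictly between any two consecutive occurrences of
the same symbol every symbol occurs an even number of times. -/
def IsCAPP {α : Type*} [DecidableEq α] (l : List α) : Prop :=
  (∀ a ∈ l, Even (l.count a)) ∧
  ∀ i j : Fin l.length, i < j → l.get i = l.get j →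
    (∀ m : Fin l.length, i < m → m < j → l.get m ≠ l.get i) →
    ∀ b, Even (((l.take j).drop (i + 1)).count b)

/-- One step of the stack automaton reading a CAPP: pop if the symbol is on top
of the stack (an even-numbered occurrence), push otherwise. -/
def stackStep {α : Type*} [DecidableEq α] (s : List α) (a : α) : List α :=
  if s.head? = some a then s.tail else a :: s

/-- The stack state after reading the first `i` symbols of `l`; the stack
states are the vertices of the diagram of a CAPP. -/
def prefixStack {α : Type*} [DecidableEq α] (l : List α) (i : ℕ) : List α :=
  (l.take i).foldl stackStep []

/-- The diagram edges of the symbols `a` and `b` share a vertex.  (The diagram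
edge of a symbol joins the stack state just before its first occurrence to that
state with the symbol pushed.) -/
def EdgeAdj {α : Type*} [DecidableEq α] (l : List α) (a b : α) : Prop :=
  prefixStack l (l.idxOf a) = prefixStack l (l.idxOf b) ∨
  prefixStack l (l.idxOf a) = b :: prefixStack l (l.idxOf b) ∨
  a :: prefixStack l (l.idxOf a) = prefixStack l (l.idxOf b) ∨
  a :: prefixStack l (l.idxOf a) = b :: prefixStack l (l.idxOf b)

instance {α : Type*} [DecidableEq α] (l : List α) (a b : α) :
    Decidable (EdgeAdj l a b) := by unfold EdgeAdj; infer_instance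

/-- `alphaOf l b` is `α_j`: the number of symbols first occurring strictly
before `b` whose diagram edge is adjacent to that of `b`. -/
def alphaOf {α : Type*} [DecidableEq α] (l : List α) (b : α) : ℕ :=
  ((l.eraseDups.takeWhile (fun a => decide (a ≠ b))).filter
    (fun a => decide (EdgeAdj l a b))).length

/-- The multiplicity `m_π(d) = ∏_j (d - α_j)` of a CAPP. -/
noncomputable def cappMult {α : Type*} [DecidableEq α] (l : List α) (d : ℝ) : ℝ :=
  (l.eraseDups.map (fun b => d - (alphaOf l b : ℝ))).prod

/-- The moment contribution `μ(n_1) ⋯ μ(n_r)` attached to the signature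
`σ(π) = (n_1, …, n_r)` of a CAPP. -/
noncomputable def cappMomProd {α : Type*} [DecidableEq α] (l : List α)
    (μ : ℕ → ℝ) : ℝ :=
  (l.eraseDups.map (fun b => μ (l.count b))).prod

/-- `P_k`: equivalence classes of CAPPs of length `k`, represented by their
canonical representatives over the symbols `ℕ` (symbols labelled `0, 1, 2, …`
in order of first occurrence). -/
def cappClasses (k : ℕ) : Set (List ℕ) :=
  {l | IsCAPP l ∧ l.length = k ∧ l.map (fun a => l.eraseDups.idxOf a) = l}

/-- `P°_k`: all classes of CAPPs of length `k` except the single class in which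
only one symbol occurs. -/
def cappClassesCirc (k : ℕ) : Set (List ℕ) :=
  {l ∈ cappClasses k | l.eraseDups.length ≠ 1}

/-- `μ` is the eigenmoment sequence for degree `d`: it vanishes at odd indices,
has `μ 2 = 1/4`, and satisfies the recursion
`μ(2k) = (d^k − d)⁻¹ · ∑_{π ∈ P°_{2k}} m_π(d)·μ(n_1)⋯μ(n_r)` for `k ≥ 2`. -/
def IsEigenmomentSeq (d : ℕ) (μ : ℕ → ℝ) : Prop :=
  (∀ k, Odd k → μ k = 0) ∧ μ 2 = 1 / 4 ∧
  ∀ k, 2 ≤ k →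
    μ (2 * k) = ((d : ℝ) ^ k - (d : ℝ))⁻¹ *
      ∑ᶠ π ∈ cappClassesCirc (2 * k), cappMult π (d : ℝ) * cappMomProd π μ

/-- `c_m`: the `m`-th moment of the semicircle distribution normalized to have
second moment `1/4`; `c_{2k} = binom(2k,k)/(4^k (k+1))` and `c_{2k+1} = 0`. -/
noncomputable def semicircleMoment (m : ℕ) : ℝ :=
  if Even m then (Nat.choose m (m / 2) : ℝ) / (4 ^ (m / 2) * (m / 2 + 1)) else 0

section Decidability

variable {α : Type*} [DecidableEq α]

theorem isCAPP_iff_forall_mem (l : List α) :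
    IsCAPP l ↔ (∀ a ∈ l, Even (l.count a)) ∧
      ∀ i j : Fin l.length, i < j → l.get i = l.get j →
        (∀ m : Fin l.length, i < m → m < j → l.get m ≠ l.get i) →
        ∀ b ∈ (l.take j).drop (i + 1), Even (((l.take j).drop (i + 1)).count b) := by
  refine and_congr_right fun _ => forall₂_congr fun i j => imp_congr_right fun _ =>
    imp_congr_right fun _ => imp_congr_right fun _ => ⟨fun h b _ => h b, fun h b => ?_⟩
  by_cases hb : b ∈ (l.take j).drop (i + 1)
  · exact h b hb
  · simp [List.count_eq_zero_of_not_mem hb]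

instance : DecidablePred (IsCAPP (α := α)) :=
  fun l => decidable_of_iff _ (isCAPP_iff_forall_mem l).symm

end Decidability

instance (k : ℕ) : DecidablePred (· ∈ cappClassesCirc k) := fun l =>
  inferInstanceAs (Decidable ((IsCAPP l ∧ l.length = k ∧
    l.map (fun a => l.eraseDups.idxOf a) = l) ∧ l.eraseDups.length ≠ 1))

def IsRestrictedGrowth (l : List ℕ) : Prop := ∀ a ∈ l, l.eraseDups.idxOf a = a

theorem isRestrictedGrowth_iff_map_eq_self {l : List ℕ} :
    IsRestrictedGrowth l ↔ l.map (fun a => l.eraseDups.idxOf a) = l := by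
  conv_rhs => rhs; rw [← List.map_id l]
  exact List.map_inj_left.symm

def restrictedGrowthStrings : ℕ → List (List ℕ)
  | 0 => [[]]
  | n + 1 => (restrictedGrowthStrings n).flatMap fun t =>
      (List.range (t.eraseDups.length + 1)).map fun a => t ++ [a]

theorem IsRestrictedGrowth.of_append_singleton {t : List ℕ} {a : ℕ}
    (h : IsRestrictedGrowth (t ++ [a])) : IsRestrictedGrowth t ∧ a ≤ t.eraseDups.length := by
  have key : (t ++ [a]).eraseDups = t.eraseDups ++ if a ∈ t then [] else [a] := by
    rw [List.eraseDups_append]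
    split_ifs with ha <;> simp [List.removeAll, ha, List.eraseDups_cons]
  refine ⟨fun b hb => ?_, ?_⟩
  · have := h b (List.mem_append_left _ hb)
    rwa [key, List.idxOf_append_of_mem (List.mem_eraseDups.2 hb)] at this
  · have ha : a ∈ (t ++ [a]).eraseDups := List.mem_eraseDups.2 (by simp)
    have hlt := List.idxOf_lt_length_iff.2 ha
    rw [h a (by simp), key] at hlt
    split_ifs at hlt <;> simp at hlt <;> omega

theorem mem_restrictedGrowthStrings {l : List ℕ} (h : IsRestrictedGrowth l) :
    l ∈ restrictedGrowthStrings l.length := by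
  induction l using List.reverseRecOn with
  | nil => simp [restrictedGrowthStrings]
  | append_singleton t a ih =>
    obtain ⟨ht, ha⟩ := h.of_append_singleton
    simp only [List.length_append, List.length_singleton, restrictedGrowthStrings,
      List.mem_flatMap, List.mem_map, List.mem_range]
    exact ⟨t, ih ht, a, by omega, rfl⟩

def cappClassesCircFinset (k : ℕ) : Finset (List ℕ) :=
  ((restrictedGrowthStrings k).filter (· ∈ cappClassesCirc k)).toFinset

theorem coe_cappClassesCircFinset (k : ℕ) :
    (cappClassesCircFinset k : Set (List ℕ)) = cappClassesCirc k := by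
  ext l
  simp only [cappClassesCircFinset, List.coe_toFinset, List.mem_filter,
    decide_eq_true_eq, Set.mem_ofPred_eq, and_iff_right_iff_imp]
  intro hl
  obtain ⟨⟨-, hlen, hrg⟩, -⟩ := hl
  exact hlen ▸ mem_restrictedGrowthStrings (isRestrictedGrowth_iff_map_eq_self.2 hrg)

def cappProfile {α : Type*} [DecidableEq α] (l : List α) : Multiset ℕ × Multiset ℕ :=
  (l.eraseDups.map (alphaOf l), l.eraseDups.map l.count)

noncomputable def profileWeight (d : ℝ) (μ : ℕ → ℝ) (p : Multiset ℕ × Multiset ℕ) : ℝ :=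
  (p.1.map fun a : ℕ => d - (a : ℝ)).prod * (p.2.map μ).prod

theorem cappMult_mul_cappMomProd {α : Type*} [DecidableEq α] (l : List α) (d : ℝ) (μ : ℕ → ℝ) :
    cappMult l d * cappMomProd l μ = profileWeight d μ (cappProfile l) := by
  simp only [cappMult, cappMomProd, profileWeight, cappProfile, Multiset.map_coe,
    Multiset.prod_coe, List.map_map]
  rfl

theorem finsum_cappClassesCirc (k : ℕ) (d : ℝ) (μ : ℕ → ℝ) :
    ∑ᶠ π ∈ cappClassesCirc k, cappMult π d * cappMomProd π μ =
      (((cappClassesCircFinset k).val.map cappProfile).map (profileWeight d μ)).sum := by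
  rw [← coe_cappClassesCircFinset, finsum_mem_coe_finset, Multiset.map_map]
  simp only [cappMult_mul_cappMomProd]
  rfl

theorem cappProfiles_four :
    (cappClassesCircFinset 4).val.map cappProfile = 2 • {({0, 1}, {2, 2})} := by
  decide

theorem cappProfiles_six :
    (cappClassesCircFinset 6).val.map cappProfile =
      6 • {({0, 1}, {2, 4})} + 2 • {({0, 1, 2}, {2, 2, 2})} + 3 • {({0, 1, 1}, {2, 2, 2})} := by
  decide

set_option maxRecDepth 10000 in
theorem cappProfiles_eight :
    (cappClassesCircFinset 8).val.map cappProfile =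
      8 • {({0, 1}, {2, 6})} + 6 • {({0, 1}, {4, 4})} + 12 • {({0, 1, 2}, {2, 2, 4})} +
        16 • {({0, 1, 1}, {2, 2, 4})} + 2 • {({0, 1, 2, 3}, {2, 2, 2, 2})} +
        8 • {({0, 1, 1, 2}, {2, 2, 2, 2})} + 4 • {({0, 1, 1, 1}, {2, 2, 2, 2})} := by
  decide

section ClosedForms

variable (d : ℝ) (μ : ℕ → ℝ)

theorem finsum_cappClassesCirc_four :
    ∑ᶠ π ∈ cappClassesCirc 4, cappMult π d * cappMomProd π μ = d * (d - 1) * (2 * μ 2 ^ 2) := by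
  rw [finsum_cappClassesCirc, cappProfiles_four]
  simp only [Multiset.insert_eq_cons, profileWeight, Multiset.map_nsmul, Multiset.map_singleton,
    Multiset.map_cons, CharP.cast_eq_zero, sub_zero, Nat.cast_one, Multiset.prod_cons,
    Multiset.prod_singleton, Multiset.sum_nsmul, Multiset.sum_singleton, nsmul_eq_mul,
    Nat.cast_ofNat]
  ring

theorem finsum_cappClassesCirc_six :
    ∑ᶠ π ∈ cappClassesCirc 6, cappMult π d * cappMomProd π μ =
      d * (d - 1) * (6 * μ 2 * μ 4 + (5 * d - 7) * μ 2 ^ 3) := by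
  rw [finsum_cappClassesCirc, cappProfiles_six]
  simp only [Multiset.insert_eq_cons, profileWeight, Multiset.map_add, Multiset.map_nsmul,
    Multiset.map_singleton, Multiset.map_cons, CharP.cast_eq_zero, sub_zero, Nat.cast_one,
    Multiset.prod_cons, Multiset.prod_singleton, Nat.cast_ofNat, Multiset.sum_add,
    Multiset.sum_nsmul, Multiset.sum_singleton, nsmul_eq_mul]
  ring

theorem finsum_cappClassesCirc_eight :
    ∑ᶠ π ∈ cappClassesCirc 8, cappMult π d * cappMomProd π μ =
      d * (d - 1) * (8 * μ 2 * μ 6 + 6 * μ 4 ^ 2 + (28 * d - 40) * μ 2 ^ 2 * μ 4 +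
        (14 * d ^ 2 - 42 * d + 32) * μ 2 ^ 4) := by
  rw [finsum_cappClassesCirc, cappProfiles_eight]
  simp only [Multiset.insert_eq_cons, profileWeight, Multiset.map_add, Multiset.map_nsmul,
    Multiset.map_singleton, Multiset.map_cons, CharP.cast_eq_zero, sub_zero, Nat.cast_one,
    Multiset.prod_cons, Multiset.prod_singleton, Nat.cast_ofNat, Multiset.sum_add,
    Multiset.sum_nsmul, Multiset.sum_singleton, nsmul_eq_mul]
  ring

end ClosedForms

namespace IsEigenmomentSeq

variable {d : ℕ} {μ : ℕ → ℝ}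

theorem moment_eq_div_of_finsum_eq (hμ : IsEigenmomentSeq d μ) (hd : 2 ≤ d) {k : ℕ} (hk : 2 ≤ k)
    {q X : ℝ} (hq : (d : ℝ) ^ k - d = d * (d - 1) * q)
    (hsum : ∑ᶠ π ∈ cappClassesCirc (2 * k), cappMult π d * cappMomProd π μ = d * (d - 1) * X) :
    μ (2 * k) = X / q := by
  have hd' : (2 : ℝ) ≤ d := by exact_mod_cast hd
  have hne : (d : ℝ) * (d - 1) ≠ 0 := by nlinarith
  rw [hμ.2.2 k hk, hsum, hq, mul_inv_rev, mul_assoc, inv_mul_cancel_left₀ hne, div_eq_inv_mul]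

theorem moment_four (hμ : IsEigenmomentSeq d μ) (hd : 2 ≤ d) : μ 4 = 1 / 8 := by
  rw [hμ.moment_eq_div_of_finsum_eq hd (k := 2) le_rfl (q := 1) (by ring)
    (finsum_cappClassesCirc_four _ _), hμ.2.1]
  norm_num

theorem moment_six (hμ : IsEigenmomentSeq d μ) (hd : 2 ≤ d) : μ 6 = 5 / 64 := by
  rw [hμ.moment_eq_div_of_finsum_eq hd (k := 3) (by norm_num) (q := d + 1) (by ring)
    (finsum_cappClassesCirc_six _ _), hμ.2.1, hμ.moment_four hd]
  have : (d : ℝ) + 1 ≠ 0 := by positivity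
  field_simp
  ring

theorem moment_eight (hμ : IsEigenmomentSeq d μ) (hd : 2 ≤ d) :
    μ 8 = 7 / 128 + 1 / (128 * ((d : ℝ) ^ 2 + d + 1)) := by
  rw [hμ.moment_eq_div_of_finsum_eq hd (k := 4) (by norm_num) (q := d ^ 2 + d + 1) (by ring)
    (finsum_cappClassesCirc_eight _ _), hμ.2.1, hμ.moment_four hd, hμ.moment_six hd]
  have : (d : ℝ) ^ 2 + d + 1 ≠ 0 := by positivity
  field_simp
  ring

end IsEigenmomentSeq

theorem semicircleMoment_eight : semicircleMoment 8 = 7 / 128 := by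
  norm_num [semicircleMoment, Nat.choose]

/-- For every `d ≥ 2`, the eighth eigenmoment is
`7/128 + 1/(128(d² + d + 1))`; in particular it differs from the eighth moment
`c_8 = 7/128` of the normalized semicircle distribution. -/
theorem stmt4 (d : ℕ) (hd : 2 ≤ d) (μ : ℕ → ℝ) (hμ : IsEigenmomentSeq d μ) :
    μ 8 = 7 / 128 + 1 / (128 * ((d : ℝ) ^ 2 + d + 1)) ∧
    μ 8 ≠ semicircleMoment 8 := by
  have h8 := hμ.moment_eight hd
  refine ⟨h8, ?_⟩
  rw [h8, semicircleMoment_eight, Ne, add_eq_left]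
  positivity
end

section
/- Let G be a simple graph that is acyclic, let p be a walk in G from a vertex u to a vertex v, and let e be an edge of G. Then p traverses e an even number of times if and only if u and v lie in the same connected component of the graph obtained from G by deleting the edge e (i.e., u and v are reachable in G with e removed). -/
/-!
Removing an edge `e = s(a, b)` from `G` leaves every vertex of the component of `a` reachable
from `a` or from `b`. If `e` is a bridge, this splits the component into exactly two sides, and
a walk changes side precisely when it traverses `e`; so it ends on the side it started from iff
it traverses `e` an even number of times. In an acyclic graph every edge is a bridge.
-/

namespace SimpleGraph

variable {V : Type*} {G : SimpleGraph V}

theorem Reachable.deleteEdges_or_exists_mem {e : Sym2 V} {x y : V} (h : G.Reachable x y) :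
    (G.deleteEdges {e}).Reachable x y ∨ ∃ z ∈ e, (G.deleteEdges {e}).Reachable z y := by
  obtain ⟨p⟩ := h
  induction p with
  | nil => exact .inl .rfl
  | @cons x z y hxz q ih =>
    by_cases hxz_e : s(x, z) = e
    · subst hxz_e
      exact .inr (ih.elim (fun h => ⟨z, Sym2.mem_mk_right x z, h⟩) id)
    · have hH : (G.deleteEdges {e}).Adj x z := (deleteEdges_adj ..).mpr ⟨hxz, hxz_e⟩
      exact ih.imp hH.reachable.trans id

theorem IsBridge.reachable_deleteEdges_iff_not {a b y : V} (hb : G.IsBridge s(a, b))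
    (hy : G.Reachable a y) :
    (G.deleteEdges {s(a, b)}).Reachable a y ↔ ¬ (G.deleteEdges {s(a, b)}).Reachable b y := by
  refine ⟨fun hay hby => isBridge_iff.mp hb (hay.trans hby.symm), fun hby => ?_⟩
  rcases hy.deleteEdges_or_exists_mem (e := s(a, b)) with hay | ⟨z, hz, hzy⟩
  · exact hay
  · rcases Sym2.mem_iff.mp hz with rfl | rfl
    · exact hzy
    · exact absurd hzy hby

theorem IsBridge.even_count_edges_iff_reachable [DecidableEq V] {e : Sym2 V}
    (hb : G.IsBridge e) {u v : V} (p : G.Walk u v) :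
    Even (p.edges.count e) ↔ (G.deleteEdges {e}).Reachable u v := by
  induction p with
  | nil => simp
  | @cons u w v huw q ih =>
    rw [Walk.edges_cons]
    by_cases huw_e : s(u, w) = e
    · subst huw_e
      rw [List.count_cons_self, Nat.even_add_one, ih,
        hb.reachable_deleteEdges_iff_not (huw.reachable.trans q.reachable)]
    · have hH : (G.deleteEdges {e}).Adj u w := (deleteEdges_adj ..).mpr ⟨huw, huw_e⟩
      rw [List.count_cons_of_ne huw_e, ih]
      exact ⟨hH.reachable.trans, hH.reachable.symm.trans⟩

end SimpleGraph

open SimpleGraph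

/-- In an acyclic simple graph, a walk from `u` to `v` traverses an edge `e` an
even number of times if and only if `u` and `v` are reachable in the graph with
`e` deleted. -/
theorem stmt9 {V : Type*} [DecidableEq V] (G : SimpleGraph V)
    (hG : G.IsAcyclic) {u v : V} (p : G.Walk u v) (e : Sym2 V)
    (he : e ∈ G.edgeSet) :
    Even (p.edges.count e) ↔ (G.deleteEdges {e}).Reachable u v :=
  (isAcyclic_iff_forall_isBridge.mp hG he).even_count_edges_iff_reachable p
end
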